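/- arXiv:1906.04038 — 2 statements merged into one kernel-verified Lean document; each statement's English description precedes it below -/
import Mathlib

section
/- Fix d ≥ 1 and k ∈ {0,1,…,d}. For every y ∈ ℝ^d, the Capra conjugate of the characteristic function of the level set {x ∈ ℝ^d : ℓ0(x) ≤ k} equals the 2-k-symmetric gauge norm of y; explicitly, sup{ ¢(x,y) : x ∈ ℝ^d, ℓ0(x) ≤ k } = ‖y‖_(k), and the same identity holds for the coupling −¢ in place of ¢ (by symmetry of the level set). -/
noncomputable section

variable {d : ℕ}

/-- The projection `x_K` of `x` onto the coordinates in `K`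
(the components outside `K` vanish). -/
def restr (K : Finset (Fin d)) (x : EuclideanSpace ℝ (Fin d)) : EuclideanSpace ℝ (Fin d) :=
  WithLp.toLp 2 (fun i => if i ∈ K then x i else 0)

/-- The 2-k-symmetric gauge norm `‖y‖_(k) = sup {‖y_K‖ : |K| ≤ k}`
(equal to `0` for `k = 0`, by the convention `‖·‖_(0) = 0`). -/
def gaugeNorm (k : ℕ) (y : EuclideanSpace ℝ (Fin d)) : ℝ :=
  ⨆ K : {K : Finset (Fin d) // K.card ≤ k}, ‖restr (K : Finset (Fin d)) y‖

/-- The ℓ₀ pseudonorm: the number of nonzero components. -/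
def l0 (x : EuclideanSpace ℝ (Fin d)) : ℕ :=
  (Finset.univ.filter fun i => x i ≠ 0).card

open Classical in
/-- The Capra coupling `¢(x,y) = ⟨x,y⟩ / ‖x‖` for `x ≠ 0`, and `¢(0,y) = 0`. -/
def capra (x y : EuclideanSpace ℝ (Fin d)) : ℝ :=
  if x = 0 then 0 else (inner ℝ x y : ℝ) / ‖x‖

/-- The Capra conjugate of ℓ₀: `y ↦ max_{0 ≤ l ≤ d} (‖y‖_(l) − l)`. -/
def capraConjL0 (y : EuclideanSpace ℝ (Fin d)) : ℝ :=
  ⨆ l : Fin (d + 1), (gaugeNorm (l : ℕ) y - ((l : ℕ) : ℝ))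

/-- `L₀(x) = sup_y (⟨x,y⟩ − max_{0 ≤ l ≤ d}(‖y‖_(l) − l))`, with values in `ℝ̄ = EReal`. -/
def L0 (x : EuclideanSpace ℝ (Fin d)) : EReal :=
  ⨆ y : EuclideanSpace ℝ (Fin d), (((inner ℝ x y : ℝ) - capraConjL0 y : ℝ) : EReal)

/-- The k-support norm: the dual norm of the 2-k-symmetric gauge norm,
`‖y‖^sp_(k) = sup {⟨x,y⟩ : ‖x‖_(k) ≤ 1}`. -/
def suppNorm (k : ℕ) (y : EuclideanSpace ℝ (Fin d)) : ℝ :=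
  sSup {c : ℝ | ∃ x : EuclideanSpace ℝ (Fin d), gaugeNorm k x ≤ 1 ∧ c = (inner ℝ x y : ℝ)}

/-- The unit ball of the k-support norm, with the convention `B^sp_(0) = {0}`. -/
def Bsp (d k : ℕ) : Set (EuclideanSpace ℝ (Fin d)) :=
  if k = 0 then {0} else {y | suppNorm k y ≤ 1}

/-- The degenerate unit sphere `S_K = {x : x_{−K} = 0 and ‖x_K‖ = 1}`. -/
def sphK (K : Finset (Fin d)) : Set (EuclideanSpace ℝ (Fin d)) :=
  {x | (∀ i, i ∉ K → x i = 0) ∧ ‖restr K x‖ = 1}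

/-- The degenerate unit ball `B_K = {x : x_{−K} = 0 and ‖x_K‖ ≤ 1}`. -/
def ballK (K : Finset (Fin d)) : Set (EuclideanSpace ℝ (Fin d)) :=
  {x | (∀ i, i ∉ K → x i = 0) ∧ ‖restr K x‖ ≤ 1}

/-!
On a vector `x` with support `K`, Cauchy–Schwarz gives `⟨x, y⟩ = ⟨x, y_K⟩ ≤ ‖x‖ ‖y_K‖`, so
`¢(x, y) ≤ ‖y_K‖ ≤ ‖y‖_(k)` whenever `ℓ₀(x) ≤ k`; conversely `x = y_K` attains
`¢(y_K, y) = ‖y_K‖`. The level set is symmetric and `¢(-x, y) = -¢(x, y)`, which gives the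
identity for `-¢`.
-/

theorem inner_restr_left (K : Finset (Fin d)) (x y : EuclideanSpace ℝ (Fin d)) :
    (inner ℝ (restr K x) y : ℝ) = inner ℝ (restr K x) (restr K y) := by
  simp only [PiLp.inner_apply, RCLike.inner_apply, conj_trivial, restr]
  refine Finset.sum_congr rfl fun i _ => ?_
  split_ifs <;> simp

theorem inner_restr_self (K : Finset (Fin d)) (y : EuclideanSpace ℝ (Fin d)) :
    (inner ℝ (restr K y) y : ℝ) = ‖restr K y‖ ^ 2 := by
  rw [inner_restr_left, real_inner_self_eq_norm_sq]

theorem restr_empty (y : EuclideanSpace ℝ (Fin d)) : restr ∅ y = 0 := by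
  ext i
  simp [restr]

theorem restr_support_self (x : EuclideanSpace ℝ (Fin d)) :
    restr (Finset.univ.filter fun i => x i ≠ 0) x = x := by
  ext i
  by_cases h : x i = 0 <;> simp [restr, h]

theorem l0_restr_le (K : Finset (Fin d)) (y : EuclideanSpace ℝ (Fin d)) :
    l0 (restr K y) ≤ K.card := by
  refine Finset.card_le_card fun i hi => ?_
  by_contra h
  simp [restr, h] at hi

theorem l0_neg (x : EuclideanSpace ℝ (Fin d)) : l0 (-x) = l0 x := by
  simp [l0]

theorem norm_restr_le_gaugeNorm {k : ℕ} {K : Finset (Fin d)} (hK : K.card ≤ k)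
    (y : EuclideanSpace ℝ (Fin d)) : ‖restr K y‖ ≤ gaugeNorm k y :=
  le_ciSup (f := fun K : {K : Finset (Fin d) // K.card ≤ k} => ‖restr (K : Finset (Fin d)) y‖)
    (Set.finite_range _).bddAbove ⟨K, hK⟩

theorem gaugeNorm_nonneg (k : ℕ) (y : EuclideanSpace ℝ (Fin d)) : 0 ≤ gaugeNorm k y := by
  simpa [restr_empty] using norm_restr_le_gaugeNorm (k := k) (K := ∅) (Nat.zero_le k) y

theorem capra_neg_left (x y : EuclideanSpace ℝ (Fin d)) : capra (-x) y = -capra x y := by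
  by_cases h : x = 0
  · simp [capra, h]
  · simp [capra, h, inner_neg_left, neg_div]

theorem capra_restr_self (K : Finset (Fin d)) (y : EuclideanSpace ℝ (Fin d)) :
    capra (restr K y) y = ‖restr K y‖ := by
  by_cases h : restr K y = 0
  · simp [capra, h]
  · have hpos : 0 < ‖restr K y‖ := norm_pos_iff.mpr h
    rw [capra, if_neg h, inner_restr_self]
    field_simp

theorem capra_le_gaugeNorm {k : ℕ} {x : EuclideanSpace ℝ (Fin d)} (hx : l0 x ≤ k)
    (y : EuclideanSpace ℝ (Fin d)) : capra x y ≤ gaugeNorm k y := by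
  by_cases hx0 : x = 0
  · simpa [capra, hx0] using gaugeNorm_nonneg k y
  set K := Finset.univ.filter fun i => x i ≠ 0
  have hxK : restr K x = x := restr_support_self x
  have hnorm : 0 < ‖x‖ := norm_pos_iff.mpr hx0
  rw [capra, if_neg hx0, div_le_iff₀ hnorm]
  calc (inner ℝ x y : ℝ) = inner ℝ (restr K x) (restr K y) := by rw [← inner_restr_left, hxK]
    _ ≤ ‖restr K x‖ * ‖restr K y‖ := real_inner_le_norm _ _
    _ = ‖restr K y‖ * ‖x‖ := by rw [hxK, mul_comm]
    _ ≤ gaugeNorm k y * ‖x‖ := mul_le_mul_of_nonneg_right (norm_restr_le_gaugeNorm hx y) hnorm.le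

theorem isLUB_capra_level_set (k : ℕ) (y : EuclideanSpace ℝ (Fin d)) :
    IsLUB {c : ℝ | ∃ x : EuclideanSpace ℝ (Fin d), l0 x ≤ k ∧ c = capra x y}
      (gaugeNorm k y) := by
  refine ⟨?_, fun b hb => ?_⟩
  · rintro c ⟨x, hx, rfl⟩
    exact capra_le_gaugeNorm hx y
  · have : Nonempty {K : Finset (Fin d) // K.card ≤ k} := ⟨⟨∅, Nat.zero_le k⟩⟩
    refine ciSup_le fun K => hb ⟨restr K y, (l0_restr_le K y).trans K.2, ?_⟩
    rw [capra_restr_self]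

theorem neg_capra_level_set_eq (k : ℕ) (y : EuclideanSpace ℝ (Fin d)) :
    {c : ℝ | ∃ x : EuclideanSpace ℝ (Fin d), l0 x ≤ k ∧ c = -capra x y}
      = {c : ℝ | ∃ x : EuclideanSpace ℝ (Fin d), l0 x ≤ k ∧ c = capra x y} := by
  ext c
  constructor
  · rintro ⟨x, hx, rfl⟩
    exact ⟨-x, (l0_neg x).trans_le hx, (capra_neg_left x y).symm⟩
  · rintro ⟨x, hx, rfl⟩
    exact ⟨-x, (l0_neg x).trans_le hx, by rw [capra_neg_left, neg_neg]⟩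

theorem capra_conjugate_char_level_set_general (d : ℕ) (k : ℕ)
    (y : EuclideanSpace ℝ (Fin d)) :
    sSup {c : ℝ | ∃ x : EuclideanSpace ℝ (Fin d), l0 x ≤ k ∧ c = capra x y}
        = gaugeNorm k y ∧
    sSup {c : ℝ | ∃ x : EuclideanSpace ℝ (Fin d), l0 x ≤ k ∧ c = - capra x y}
        = gaugeNorm k y := by
  have hsup := (isLUB_capra_level_set k y).csSup_eq ⟨0, 0, by simp [l0], by simp [capra]⟩
  exact ⟨hsup, by rw [neg_capra_level_set_eq, hsup]⟩

/-- the Capra conjugate of the characteristic function of the level set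
`{x : ℓ₀(x) ≤ k}` equals the 2-k-symmetric gauge norm, i.e.
`sup {¢(x,y) : ℓ₀(x) ≤ k} = ‖y‖_(k)`, and the same identity holds with `−¢` in place
of `¢`. -/
theorem capra_conjugate_char_level_set (d : ℕ) (hd : 1 ≤ d) (k : ℕ) (hk : k ≤ d)
    (y : EuclideanSpace ℝ (Fin d)) :
    sSup {c : ℝ | ∃ x : EuclideanSpace ℝ (Fin d), l0 x ≤ k ∧ c = capra x y}
        = gaugeNorm k y ∧
    sSup {c : ℝ | ∃ x : EuclideanSpace ℝ (Fin d), l0 x ≤ k ∧ c = - capra x y}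
        = gaugeNorm k y :=
  capra_conjugate_char_level_set_general d k y
end
end

section
/- Fix d ≥ 1 and k ∈ {0,1,…,d}. The intersection of the Euclidean unit sphere S of ℝ^d with the level set {x : ℓ0(x) ≤ k} equals the topological closure of the intersection of S with the level curve {x : ℓ0(x) = k}: S ∩ {x : ℓ0(x) ≤ k} = closure( S ∩ {x : ℓ0(x) = k} ). -/
noncomputable section

variable {d : ℕ}

/-!
A unit vector `x` with `ℓ₀(x) ≤ k` is the limit, as `t → 0`, of the normalisations of `x + t e`,
where `e` switches on `k - ℓ₀(x)` coordinates at which `x` vanishes; these all lie on the level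
curve. Conversely `ℓ₀` is lower semicontinuous (a nonzero coordinate stays nonzero nearby), so
the level set `{ℓ₀ ≤ k}` is closed.
-/

open Filter Topology

lemma l0_smul {c : ℝ} (hc : c ≠ 0) (x : EuclideanSpace ℝ (Fin d)) : l0 (c • x) = l0 x := by
  simp only [l0, PiLp.smul_apply, smul_eq_mul, ne_eq, mul_eq_zero, hc, false_or]

lemma l0_add_of_disjoint {x y : EuclideanSpace ℝ (Fin d)} (h : ∀ i, x i = 0 ∨ y i = 0) :
    l0 (x + y) = l0 x + l0 y := by
  rw [l0, l0, l0, ← Finset.card_union_of_disjoint, ← Finset.filter_or]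
  · congr 1
    refine Finset.filter_congr fun i _ => ?_
    rcases h i with hi | hi <;> simp [hi]
  · rw [Finset.disjoint_filter]
    intro i _ hx hy
    rcases h i with hi | hi <;> contradiction

lemma exists_disjoint_l0_add_eq {k : ℕ} {x : EuclideanSpace ℝ (Fin d)} (hxk : l0 x ≤ k)
    (hk : k ≤ d) : ∃ e : EuclideanSpace ℝ (Fin d), (∀ i, x i = 0 ∨ e i = 0) ∧ l0 x + l0 e = k := by
  have hcard : k - l0 x ≤ (Finset.univ.filter fun i => ¬x i ≠ 0).card := by
    have := Finset.card_filter_add_card_filter_not (s := Finset.univ) fun i => x i ≠ 0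
    rw [Finset.card_univ, Fintype.card_fin, ← l0] at this
    omega
  obtain ⟨E, hE, hEcard⟩ := Finset.exists_subset_card_eq hcard
  refine ⟨WithLp.toLp 2 fun i => if i ∈ E then 1 else 0, fun i => ?_, ?_⟩
  · by_cases hi : i ∈ E
    · exact .inl (not_not.1 (Finset.mem_filter.1 (hE hi)).2)
    · simp [hi]
  · have : l0 (WithLp.toLp 2 fun i => if i ∈ E then (1 : ℝ) else 0 : EuclideanSpace ℝ (Fin d))
        = E.card := by
      simp [l0]
    omega

lemma lowerSemicontinuous_l0 : LowerSemicontinuous (l0 : EuclideanSpace ℝ (Fin d) → ℕ) := by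
  intro x k hk
  have hsupp : ∀ᶠ y in 𝓝 x, ∀ i, x i ≠ 0 → y i ≠ 0 := by
    refine eventually_all.2 fun i => ?_
    by_cases hi : x i = 0
    · simp [hi]
    · filter_upwards [(PiLp.continuous_apply 2 _ i).continuousAt.eventually_ne hi] with y hy
      exact fun _ => hy
  filter_upwards [hsupp] with y hy
  exact hk.trans_le <| Finset.card_le_card fun i hi =>
    Finset.mem_filter.2 ⟨Finset.mem_univ i, hy i (Finset.mem_filter.1 hi).2⟩

lemma mem_closure_sphere_inter_l0_eq {k : ℕ} (hk : k ≤ d) {x : EuclideanSpace ℝ (Fin d)}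
    (hx : ‖x‖ = 1) (hxk : l0 x ≤ k) :
    x ∈ closure ({y : EuclideanSpace ℝ (Fin d) | ‖y‖ = 1} ∩ {y | l0 y = k}) := by
  obtain ⟨e, hdisj, hl0⟩ := exists_disjoint_l0_add_eq hxk hk
  set p : ℝ → EuclideanSpace ℝ (Fin d) := fun t => x + t • e
  have hp : Continuous p := by fun_prop
  have hp0 : ‖p 0‖ ≠ 0 := by simp [p, hx]
  have hlim : Tendsto (fun t => ‖p t‖⁻¹ • p t) (𝓝[≠] 0) (𝓝 x) := by
    have h : ContinuousAt (fun t => ‖p t‖⁻¹ • p t) 0 :=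
      (hp.norm.continuousAt.inv₀ hp0).smul hp.continuousAt
    simpa [p, hx] using h.tendsto.mono_left nhdsWithin_le_nhds
  refine mem_closure_of_tendsto hlim ?_
  filter_upwards [self_mem_nhdsWithin,
    nhdsWithin_le_nhds (hp.norm.continuousAt.eventually_ne hp0)] with t ht hpt
  refine ⟨norm_smul_inv_norm (norm_ne_zero_iff.1 hpt), ?_⟩
  have hdisj' : ∀ i, x i = 0 ∨ (t • e) i = 0 := fun i => by
    rcases hdisj i with hi | hi <;> simp [hi]
  simp only [Set.mem_ofPred_eq, l0_smul (inv_ne_zero hpt), p, l0_add_of_disjoint hdisj',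
    l0_smul ht, hl0]

theorem sphere_inter_level_set_eq_closure_level_curve_general (d : ℕ)
    (k : ℕ) (hk : k ≤ d) :
    {x : EuclideanSpace ℝ (Fin d) | ‖x‖ = 1} ∩ {x | l0 x ≤ k} =
      closure ({x : EuclideanSpace ℝ (Fin d) | ‖x‖ = 1} ∩ {x | l0 x = k}) := by
  refine subset_antisymm (fun x ⟨hx, hxk⟩ => mem_closure_sphere_inter_l0_eq hk hx hxk) ?_
  refine closure_minimal (Set.inter_subset_inter_right _ fun x hx => hx.le) ?_
  exact (isClosed_eq continuous_norm continuous_const).inter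
    (lowerSemicontinuous_l0.isClosed_preimage k)

/-- the intersection of the Euclidean unit sphere with the level set
`{x : ℓ₀(x) ≤ k}` equals the closure of its intersection with the level curve
`{x : ℓ₀(x) = k}`. -/
theorem sphere_inter_level_set_eq_closure_level_curve (d : ℕ) (hd : 1 ≤ d)
    (k : ℕ) (hk : k ≤ d) :
    {x : EuclideanSpace ℝ (Fin d) | ‖x‖ = 1} ∩ {x | l0 x ≤ k} =
      closure ({x : EuclideanSpace ℝ (Fin d) | ‖x‖ = 1} ∩ {x | l0 x = k}) :=
  sphere_inter_level_set_eq_closure_level_curve_general d k hk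
end
end
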